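/- arXiv:2403.01303 — 3 statements merged into one kernel-verified Lean document; each statement's English description precedes it below -/
import Mathlib

section
/- If |F| > 2 and n ≥ 2, the diameter of the unitary Cayley graph C_{T_n(F)} equals 2. -/
open Matrix

/-- The subring of upper triangular `n × n` matrices over `F`. -/
def upperTri (F : Type) [Field F] (n : ℕ) : Subring (Matrix (Fin n) (Fin n) F) where
  carrier := {M | M.BlockTriangular id}
  zero_mem' := Matrix.blockTriangular_zero
  one_mem' := Matrix.blockTriangular_one
  add_mem' := fun ha hb => ha.add hb
  mul_mem' := fun ha hb => ha.mul hb
  neg_mem' := fun ha => ha.neg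

/-- The unitary Cayley graph of the ring `T_n(F)`. -/
def cayley (F : Type) [Field F] (n : ℕ) : SimpleGraph (upperTri F n) where
  Adj x y := x ≠ y ∧ IsUnit (x - y)
  symm := by
    constructor
    intro x y ⟨hne, hu⟩
    exact ⟨hne.symm, by simpa using hu.neg⟩
  loopless := ⟨fun x h => h.1 rfl⟩

/-!
Every element of `T_n(F)` is a sum of two units: keep its off-diagonal part and split each
diagonal entry `c` as `a + (c - a)` with `a ∉ {0, c}`, which `|F| > 2` allows. Hence any two
vertices `x, y` have the common neighbour `y + v` where `x - y = u + v`, so distances are at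
most `2`. The nonzero nilpotent `E₀₁` (which needs `n ≥ 2`) is not a unit, so it is at
distance exactly `2` from `0`.
-/

lemma SimpleGraph.diam_eq_two {V : Type*} {G : SimpleGraph V} (hle : ∀ u v, G.edist u v ≤ 2)
    {u v : V} (huv : u ≠ v) (hadj : ¬ G.Adj u v) : G.diam = 2 := by
  have hne_top : G.edist u v ≠ ⊤ := ne_top_of_le_ne_top (by decide) (hle u v)
  have hdist : G.edist u v = 2 := by
    have h0 : G.edist u v ≠ 0 := G.edist_eq_zero_iff.not.mpr huv
    have h1 : G.edist u v ≠ 1 := G.edist_eq_one_iff_adj.not.mpr hadj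
    have h2 := hle u v
    lift G.edist u v to ℕ using hne_top with k
    have : k = 2 := by norm_cast at h0 h1 h2; omega
    rw [this]; rfl
  have hediam : G.ediam = 2 :=
    le_antisymm (G.ediam_le_of_edist_le hle) (hdist ▸ G.edist_le_ediam)
  rw [SimpleGraph.diam, hediam]; rfl

lemma exists_ne_zero_ne {F : Type*} [Zero F] [Fintype F] (hF : 2 < Fintype.card F) (c : F) :
    ∃ a : F, a ≠ 0 ∧ a ≠ c :=
  ENat.exists_ne_ne_of_three_le (by rw [ENat.card_eq_coe_fintype_card]; exact_mod_cast hF) 0 c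

namespace upperTri

variable {F : Type} [Field F] {n : ℕ}

lemma isUnit_iff (M : upperTri F n) :
    IsUnit M ↔ ∀ i, (M : Matrix (Fin n) (Fin n) F) i i ≠ 0 := by
  set A : Matrix (Fin n) (Fin n) F := (M : Matrix (Fin n) (Fin n) F)
  have hA : A.BlockTriangular id := M.2
  have hdet : IsUnit A.det ↔ ∀ i, A i i ≠ 0 := by
    rw [det_of_isUpperTriangular hA, isUnit_iff_ne_zero, Finset.prod_ne_zero_iff]
    simp
  constructor
  · intro hM
    exact hdet.mp (A.isUnit_iff_isUnit_det.mp (hM.map (upperTri F n).subtype))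
  · intro hdiag
    have hAdet := hdet.mpr hdiag
    have : Invertible A := A.invertibleOfIsUnitDet hAdet
    refine isUnit_iff_exists.mpr ⟨⟨A⁻¹, blockTriangular_inv_of_blockTriangular hA⟩, ?_, ?_⟩
    · exact Subtype.ext (A.mul_nonsing_inv hAdet)
    · exact Subtype.ext (A.nonsing_inv_mul hAdet)

lemma exists_isUnit_add_eq [Fintype F] (hF : 2 < Fintype.card F) (x : upperTri F n) :
    ∃ u v : upperTri F n, IsUnit u ∧ IsUnit v ∧ x = u + v := by
  choose a ha0 hax using fun i => exists_ne_zero_ne hF ((x : Matrix (Fin n) (Fin n) F) i i)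
  let v : upperTri F n :=
    ⟨diagonal fun i => (x : Matrix (Fin n) (Fin n) F) i i - a i, blockTriangular_diagonal _⟩
  refine ⟨x - v, v, ?_, ?_, (sub_add_cancel x v).symm⟩
  · rw [isUnit_iff]
    intro i
    simpa [v] using ha0 i
  · rw [isUnit_iff]
    intro i
    simpa [v, sub_eq_zero] using (hax i).symm

lemma exists_ne_zero_not_isUnit (hn : 2 ≤ n) : ∃ e : upperTri F n, e ≠ 0 ∧ ¬ IsUnit e := by
  let i : Fin n := ⟨0, by omega⟩
  let j : Fin n := ⟨1, hn⟩
  have hij : i < j := Fin.mk_lt_mk.mpr Nat.one_pos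
  refine ⟨⟨single i j 1, blockTriangular_single (b := id) hij.le 1⟩, fun h => ?_, fun h => ?_⟩
  · simpa using congrArg (fun z : upperTri F n => (z : Matrix (Fin n) (Fin n) F) i j) h
  · exact (isUnit_iff _).mp h i (single_apply_of_ne i j (1 : F) i i fun h => hij.ne h.2.symm)

end upperTri

lemma cayley_edist_le_two {F : Type} [Field F] {n : ℕ} [Nontrivial (upperTri F n)]
    (hsum : ∀ x : upperTri F n, ∃ u v : upperTri F n, IsUnit u ∧ IsUnit v ∧ x = u + v)
    (x y : upperTri F n) : (cayley F n).edist x y ≤ 2 := by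
  obtain ⟨u, v, hu, hv, huv⟩ := hsum (x - y)
  have hxz : x - (y + v) = u := by rw [← sub_sub, huv, add_sub_cancel_right]
  have hzy : y + v - y = v := add_sub_cancel_left y v
  have hx : (cayley F n).Adj x (y + v) :=
    ⟨fun h => hu.ne_zero (by rw [← hxz, ← h, sub_self]), by rw [hxz]; exact hu⟩
  have hy : (cayley F n).Adj (y + v) y :=
    ⟨fun h => hv.ne_zero (by rw [← hzy, h, sub_self]), by rw [hzy]; exact hv⟩
  simpa using (SimpleGraph.Walk.cons hx (.cons hy .nil)).edist_le

/-- If `|F| > 2` and `n ≥ 2`, then the diameter of `C_{T_n(F)}` equals `2`. -/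
theorem stmt5 (F : Type) [Field F] [Fintype F] (n : ℕ) (hn : 2 ≤ n)
    (hF : 2 < Fintype.card F) :
    (cayley F n).diam = 2 := by
  have : NeZero n := ⟨by omega⟩
  obtain ⟨e, he0, he⟩ := upperTri.exists_ne_zero_not_isUnit (F := F) hn
  refine SimpleGraph.diam_eq_two (cayley_edist_le_two (upperTri.exists_isUnit_add_eq hF))
    he0 fun h => he (sub_zero e ▸ h.2)
end

section
/- If |F| = 2, the connected component of a matrix a in C_{T_n(F_2)} is a complete bipartite graph whose two parts are: matrices with the same diagonal as a, and matrices whose diagonal differs from that of a in every entry; each part has size 2^{n(n−1)/2}. -/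
open Matrix

/-! Since `(1 : F) = -1` when `|F| = 2`, the condition "the diagonals of `x` and `y` differ in
every entry" reads `y i i = x i i + 1`, and applying it twice returns to the diagonal of `x`.
Adjacency in `C_{T_n(F)}` is exactly this condition, because an upper triangular matrix is
invertible in `T_n(F)` iff its diagonal has no zero entry. Hence the component of `a` consists
of the two diagonal classes `d(a)` and `d(a) + 1`, joined completely to each other and carrying
no inner edges. Each class is parametrised freely by the `n(n-1)/2` strictly upper entries. -/

section TwoElementField

variable {F : Type} [Field F] [Fintype F]

lemma eq_zero_or_eq_one_of_card_eq_two (hF : Fintype.card F = 2) (x : F) : x = 0 ∨ x = 1 := by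
  classical
  by_contra! hx
  have := Finset.card_le_univ ({0, 1, x} : Finset F)
  rw [Finset.card_insert_of_notMem (by simp [hx.1.symm]),
    Finset.card_pair hx.2.symm, hF] at this
  omega

lemma one_add_one_eq_zero_of_card_eq_two (hF : Fintype.card F = 2) : (1 : F) + 1 = 0 := by
  rw [one_add_one_eq_two, ← Nat.cast_two, ← hF, FiniteField.cast_card_eq_zero]

lemma ne_iff_eq_add_one_of_card_eq_two (hF : Fintype.card F = 2) {x y : F} :
    x ≠ y ↔ y = x + 1 := by
  have h := one_add_one_eq_zero_of_card_eq_two hF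
  rcases eq_zero_or_eq_one_of_card_eq_two hF x with rfl | rfl <;>
    rcases eq_zero_or_eq_one_of_card_eq_two hF y with rfl | rfl <;> simp [h]

end TwoElementField

lemma card_fin_pairs_lt (n : ℕ) :
    Nat.card {p : Fin n × Fin n // p.1 < p.2} = n * (n - 1) / 2 := by
  let e : {p : Fin n × Fin n // p.1 < p.2} ≃ Σ j : Fin n, Fin j :=
    { toFun := fun p => ⟨p.1.2, ⟨p.1.1, p.2⟩⟩
      invFun := fun q => ⟨(⟨q.2, q.2.isLt.trans q.1.isLt⟩, q.1), q.2.isLt⟩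
      left_inv := fun _ => rfl
      right_inv := fun _ => rfl }
  rw [Nat.card_congr e, Nat.card_eq_fintype_card, Fintype.card_sigma]
  simp only [Fintype.card_fin]
  rw [Fin.sum_univ_eq_sum_range (fun i => i) n, Finset.sum_range_id]

namespace upperTri

variable {F : Type} [Field F] {n : ℕ}

lemma isUnit_iff_isUnit_val {x : upperTri F n} : IsUnit x ↔ IsUnit x.1 := by
  refine ⟨fun h => h.map (upperTri F n).subtype, fun h => ?_⟩
  have hdet : IsUnit x.1.det := (isUnit_iff_isUnit_det _).1 h
  have := x.1.invertibleOfIsUnitDet hdet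
  have hinv : x.1⁻¹ ∈ upperTri F n := blockTriangular_inv_of_blockTriangular x.2
  exact ⟨⟨x, ⟨_, hinv⟩, Subtype.ext (mul_nonsing_inv _ hdet),
    Subtype.ext (nonsing_inv_mul _ hdet)⟩, rfl⟩

lemma isUnit_iff_diag_ne_zero {x : upperTri F n} : IsUnit x ↔ ∀ i, x.1 i i ≠ 0 := by
  rw [isUnit_iff_isUnit_val, isUnit_iff_isUnit_det, det_of_isUpperTriangular x.2,
    isUnit_iff_ne_zero, Finset.prod_ne_zero_iff]
  simp

def diagFiberEquiv (d : Fin n → F) :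
    {b : upperTri F n | ∀ i, b.1 i i = d i} ≃ ({p : Fin n × Fin n // p.1 < p.2} → F) where
  toFun b p := b.1.1 p.1.1 p.1.2
  invFun f :=
    ⟨⟨fun i j => if h : i < j then f ⟨(i, j), h⟩ else if i = j then d i else 0,
      fun i j (hji : j < i) => by simp [hji.not_gt, hji.ne']⟩, fun i => by simp⟩
  left_inv b := by
    ext i j
    rcases lt_trichotomy i j with h | rfl | h
    · simp [h]
    · simp [b.2 i]
    · simp [h.not_gt, h.ne', b.1.2 h]
  right_inv f := by
    ext p
    simp [p.2]

lemma card_diag_eq (d : Fin n → F) :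
    Nat.card {b : upperTri F n | ∀ i, b.1 i i = d i} = Nat.card F ^ (n * (n - 1) / 2) := by
  rw [Nat.card_congr (diagFiberEquiv d), Nat.card_fun, card_fin_pairs_lt]

end upperTri

section Adjacency

variable {F : Type} [Field F] {n : ℕ}

lemma cayley_adj_iff (hn : 0 < n) {x y : upperTri F n} :
    (cayley F n).Adj x y ↔ ∀ i, x.1 i i ≠ y.1 i i := by
  have hunit : IsUnit (x - y) ↔ ∀ i, x.1 i i ≠ y.1 i i := by
    simp only [upperTri.isUnit_iff_diag_ne_zero, AddSubgroupClass.coe_sub, Matrix.sub_apply,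
      sub_ne_zero]
  refine ⟨fun h => hunit.1 h.2, fun h => ⟨?_, hunit.2 h⟩⟩
  rintro rfl
  exact h ⟨0, hn⟩ rfl

variable [Fintype F]

lemma cayley_adj_iff_of_card_eq_two (hF : Fintype.card F = 2) (hn : 0 < n) {x y : upperTri F n} :
    (cayley F n).Adj x y ↔ ∀ i, y.1 i i = x.1 i i + 1 := by
  simp only [cayley_adj_iff hn, ne_iff_eq_add_one_of_card_eq_two hF]

lemma cayley_reachable_iff_of_card_eq_two (hF : Fintype.card F = 2) (hn : 0 < n)
    {x y : upperTri F n} :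
    (cayley F n).Reachable x y ↔ (∀ i, y.1 i i = x.1 i i) ∨ ∀ i, y.1 i i = x.1 i i + 1 := by
  have h2 := one_add_one_eq_zero_of_card_eq_two hF
  have hadj {x y : upperTri F n} := cayley_adj_iff_of_card_eq_two hF hn (x := x) (y := y)
  constructor
  · rw [SimpleGraph.reachable_iff_reflTransGen]
    intro h
    induction h with
    | refl => exact Or.inl fun _ => rfl
    | tail _ hzw ih =>
      rw [hadj] at hzw
      rcases ih with hz | hz
      · exact Or.inr fun i => by rw [hzw, hz]
      · exact Or.inl fun i => by rw [hzw, hz, add_assoc, h2, add_zero]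
  · have hx1 : (cayley F n).Adj x (x + 1) := hadj.2 fun i => by simp
    rintro (hy | hy)
    · exact hx1.reachable.trans (hadj.2 fun i => by simp [hy, add_assoc, h2]).reachable
    · exact (hadj.2 hy).reachable

end Adjacency

/-- If `|F| = 2`, the connected component of `a` in `C_{T_n(F)}` is a complete
bipartite graph, whose parts are the matrices with the same diagonal as `a` and the
matrices whose diagonal differs from that of `a` in every entry; each part has size
`2^(n*(n-1)/2)`. -/
theorem stmt8 (F : Type) [Field F] [Fintype F] (hF : Fintype.card F = 2)
    (n : ℕ) (hn : 0 < n) (a : upperTri F n) :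
    let P1 : Set (upperTri F n) :=
      {b | ∀ i : Fin n, (b : Matrix (Fin n) (Fin n) F) i i = (a : Matrix (Fin n) (Fin n) F) i i}
    let P2 : Set (upperTri F n) :=
      {b | ∀ i : Fin n, (b : Matrix (Fin n) (Fin n) F) i i ≠ (a : Matrix (Fin n) (Fin n) F) i i}
    (∀ b : upperTri F n, (cayley F n).Reachable a b ↔ b ∈ P1 ∪ P2) ∧
    (∀ b ∈ P1, ∀ c ∈ P2, (cayley F n).Adj b c) ∧
    (∀ b ∈ P1, ∀ c ∈ P1, ¬(cayley F n).Adj b c) ∧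
    (∀ b ∈ P2, ∀ c ∈ P2, ¬(cayley F n).Adj b c) ∧
    Nat.card P1 = 2 ^ (n * (n - 1) / 2) ∧
    Nat.card P2 = 2 ^ (n * (n - 1) / 2) := by
  intro P1 P2
  have hP2 : P2 = {b | ∀ i, b.1 i i = a.1 i i + 1} :=
    Set.ext fun _ => forall_congr' fun _ => ne_comm.trans (ne_iff_eq_add_one_of_card_eq_two hF)
  have hcard (d : Fin n → F) :
      Nat.card {b : upperTri F n | ∀ i, b.1 i i = d i} = 2 ^ (n * (n - 1) / 2) := by
    rw [upperTri.card_diag_eq, Nat.card_eq_fintype_card, hF]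
  have i₀ : Fin n := ⟨0, hn⟩
  refine ⟨fun b => ?_, fun b hb c hc => ?_, fun b hb c hc hbc => ?_, fun b hb c hc hbc => ?_,
    hcard _, hP2 ▸ hcard _⟩
  · rw [cayley_reachable_iff_of_card_eq_two hF hn, hP2]
    rfl
  · rw [hP2] at hc
    exact (cayley_adj_iff_of_card_eq_two hF hn).2 fun i => by rw [hc, hb]
  · exact (cayley_adj_iff hn).1 hbc i₀ ((hb i₀).trans (hc i₀).symm)
  · rw [hP2] at hb hc
    exact (cayley_adj_iff hn).1 hbc i₀ ((hb i₀).trans (hc i₀).symm)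
end

section
/- The clique number of the unitary Cayley graph C_{T_n(F)} equals |F|. -/
open Matrix

/-!
The determinant of a triangular matrix is the product of its diagonal, so units of `T_n(F)`
have nonzero diagonal entries; hence any diagonal entry is a proper colouring of the graph by
`F`, bounding cliques by `|F|`. Conversely, the scalar matrices form a clique of size `|F|`.
-/

namespace upperTri

variable {F : Type} [Field F] {n : ℕ}

theorem diag_ne_zero_of_isUnit {x : upperTri F n} (hx : IsUnit x) (i : Fin n) :
    (x : Matrix (Fin n) (Fin n) F) i i ≠ 0 := by
  have hdet : IsUnit (x : Matrix (Fin n) (Fin n) F).det :=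
    (isUnit_iff_isUnit_det _).mp (hx.map (upperTri F n).subtype)
  rw [det_of_isUpperTriangular x.2] at hdet
  exact Finset.prod_ne_zero_iff.mp hdet.ne_zero i (Finset.mem_univ i)

variable (F n) in
def scalar : F →+* upperTri F n :=
  (Matrix.scalar (Fin n)).codRestrict _ fun _ => blockTriangular_diagonal _

theorem scalar_injective (hn : 0 < n) : Function.Injective (scalar F n) := by
  have : Nonempty (Fin n) := ⟨⟨0, hn⟩⟩
  exact fun c d h => scalar_inj.mp (congrArg Subtype.val h)

end upperTri

namespace cayley

variable {F : Type} [Field F] {n : ℕ}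

def diagColoring (i : Fin n) : (cayley F n).Coloring F :=
  SimpleGraph.Coloring.mk (fun x => (x : Matrix (Fin n) (Fin n) F) i i) fun h heq =>
    upperTri.diag_ne_zero_of_isUnit h.2 i (by simp [heq])

theorem isClique_range_scalar : (cayley F n).IsClique (Set.range (upperTri.scalar F n)) := by
  rintro _ ⟨c, rfl⟩ _ ⟨d, rfl⟩ hne
  refine ⟨hne, ?_⟩
  rw [← map_sub]
  exact (IsUnit.mk0 _ (sub_ne_zero.mpr (ne_of_apply_ne _ hne))).map _

end cayley

/-- The clique number of `C_{T_n(F)}` equals `|F|`. -/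
theorem stmt11 (F : Type) [Field F] [Fintype F] (n : ℕ) (hn : 0 < n) :
    (cayley F n).cliqueNum = Fintype.card F := by
  apply le_antisymm
  · obtain ⟨s, hs⟩ := (cayley F n).exists_isNClique_cliqueNum
    exact hs.card_eq ▸ hs.isClique.card_le_of_coloring (cayley.diagColoring ⟨0, hn⟩)
  · let scalars := Finset.univ.map ⟨upperTri.scalar F n, upperTri.scalar_injective hn⟩
    have hclique : (cayley F n).IsClique (scalars : Set (upperTri F n)) := by
      simpa [scalars] using cayley.isClique_range_scalar
    simpa [scalars] using hclique.card_le_cliqueNum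
end
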